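/- arXiv:0903.1018 — 2 statements merged into one kernel-verified Lean document; each statement's English description precedes it below -/
import Mathlib

section
/- On the jet space M = J^1(ℝ^n, ℝ^m) with contact forms θ^a = du^a − p^a_i dx^i and ψ^a = dp^a_i ∧ dx^{(i)}, let H : ℝ^n → ℝ^m be a harmonic function (pulled back to M via x) and ρ = (−1)^n * dH (Hodge star on ℝ^n with the flat metric). Then the n-form Φ = ᵗρ ∧ θ + ᵗH ψ = Σ_a (ρ^a ∧ θ^a + H^a ψ^a) is closed. -/
/-!
Write `ω = dx¹ ∧ ⋯ ∧ dxⁿ` and `s ∧ dx⁽ⁱ⁾` for `ω` with its `i`-th factor replaced by `s`.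
Expanding `θᵃ` gives `Φ = Σₐᵢ (∂ᵢHᵃ (pᵃᵢ ω − duᵃ ∧ dx⁽ⁱ⁾) + Hᵃ dpᵃᵢ ∧ dx⁽ⁱ⁾)`, in which only the
coefficients `∂ᵢHᵃ`, `pᵃᵢ`, `Hᵃ` vary. Since `dxᵏ ∧ (s ∧ dx⁽ⁱ⁾) = −δₖᵢ s ∧ ω`,
`dΦ = Σₐᵢ (∂ᵢ∂ᵢHᵃ duᵃ ∧ ω + ∂ᵢHᵃ dpᵃᵢ ∧ ω − ∂ᵢHᵃ dpᵃᵢ ∧ ω) = Σₐ ΔHᵃ duᵃ ∧ ω = 0`.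
Evaluated on vectors, each of these identities is a Laplace expansion along the first row.
-/

open Matrix Finset Function

namespace ConservationLaw

variable {V : Type*} {n : ℕ}

/-- `(rowMatrix r w).det` is `(r 0 ∧ ⋯ ∧ r (n - 1))(w)`; `update r i s` replaces the `i`-th factor
by `s`, and `Fin.cons s r` prepends `s`. -/
def rowMatrix (r : Fin n → V → ℝ) (w : Fin n → V) : Matrix (Fin n) (Fin n) ℝ :=
  Matrix.of fun k l => r k (w l)

lemma rowMatrix_update (r : Fin n → V → ℝ) (i : Fin n) (s : V → ℝ) (w : Fin n → V) :
    rowMatrix (update r i s) w = (rowMatrix r w).updateRow i (fun l => s (w l)) := by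
  ext k l
  by_cases hk : k = i <;> simp [rowMatrix, update_apply, hk]

lemma det_rowMatrix_update_sub_sum (r : Fin n → V → ℝ) (i : Fin n) (s : V → ℝ) (c : Fin n → ℝ)
    (w : Fin n → V) :
    (rowMatrix (update r i fun z => s z - ∑ l, c l * r l z) w).det
      = (rowMatrix (update r i s) w).det - c i * (rowMatrix r w).det := by
  have h : (fun l => s (w l) - ∑ k, c k * r k (w l))
      = (fun l => s (w l)) + ∑ k, (-c k) • rowMatrix r w k := by
    ext l; simp [rowMatrix, Finset.sum_apply, sub_eq_add_neg, ← Finset.sum_neg_distrib]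
  rw [rowMatrix_update, rowMatrix_update, h, det_updateRow_add, det_updateRow_sum]
  simp [sub_eq_add_neg]

lemma det_rowMatrix_cons (r₀ : V → ℝ) (r : Fin n → V → ℝ) (v : Fin (n + 1) → V) :
    (rowMatrix (Fin.cons r₀ r) v).det
      = ∑ j : Fin (n + 1), (-1) ^ (j : ℕ) * r₀ (v j) * (rowMatrix r (j.removeNth v)).det := by
  rw [det_succ_row_zero]
  rfl

lemma det_rowMatrix_cons_self (r : Fin n → V → ℝ) (k : Fin n) (v : Fin (n + 1) → V) :
    (rowMatrix (Fin.cons (r k) r) v).det = 0 :=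
  det_zero_of_row_eq (Fin.succ_ne_zero k).symm rfl

lemma det_rowMatrix_cons_update (r₀ s : V → ℝ) (r : Fin n → V → ℝ) (i : Fin n)
    (v : Fin (n + 1) → V) :
    (rowMatrix (Fin.cons r₀ (update r i s)) v).det
      = -(rowMatrix (Fin.cons s (update r i r₀)) v).det := by
  have h : rowMatrix (Fin.cons r₀ (update r i s)) v
      = (rowMatrix (Fin.cons s (update r i r₀)) v).submatrix (Equiv.swap 0 i.succ) id := by
    ext k l
    refine Fin.cases ?_ (fun k' => ?_) k
    · simp [rowMatrix, update_apply, (Fin.succ_ne_zero _).symm]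
    · rcases eq_or_ne k' i with rfl | hk
      · simp [rowMatrix, update_apply, (Fin.succ_ne_zero _).symm]
      · rw [submatrix_apply, Equiv.swap_apply_of_ne_of_ne (Fin.succ_ne_zero k') (by simpa using hk)]
        simp [rowMatrix, hk]
  rw [h, det_permute, Equiv.Perm.sign_swap (Fin.succ_ne_zero i).symm]
  simp

lemma linearMap_apply_eq_sum (L : (Fin n → ℝ) →ₗ[ℝ] ℝ) (x : Fin n → ℝ) :
    L x = ∑ k, x k * L (Pi.single k 1) := by
  simpa using congrArg L ((Pi.basisFun ℝ (Fin n)).sum_repr x).symm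

/-- `(L ∘ x) ∧ (s ∧ x⁽ⁱ⁾) = −L(eᵢ) s ∧ x¹ ∧ ⋯ ∧ xⁿ`, where `x = (r 0, …, r (n - 1))`. -/
lemma sum_alternating_mul_det_update (r : Fin n → V → ℝ) (L : (Fin n → ℝ) →ₗ[ℝ] ℝ)
    (i : Fin n) (s : V → ℝ) (v : Fin (n + 1) → V) :
    ∑ j : Fin (n + 1), (-1) ^ (j : ℕ) * L (fun k => r k (v j))
        * (rowMatrix (update r i s) (j.removeNth v)).det
      = -L (Pi.single i 1) * (rowMatrix (Fin.cons s r) v).det := by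
  have hcol : ∀ k, (rowMatrix (Fin.cons (r k) (update r i s)) v).det
      = if k = i then -(rowMatrix (Fin.cons s r) v).det else 0 := by
    intro k
    split_ifs with hk
    · rw [hk, det_rowMatrix_cons_update, update_eq_self]
    · simpa [hk] using det_rowMatrix_cons_self (update r i s) k v
  calc ∑ j : Fin (n + 1), (-1) ^ (j : ℕ) * L (fun k => r k (v j))
          * (rowMatrix (update r i s) (j.removeNth v)).det
      = ∑ k, L (Pi.single k 1) * (rowMatrix (Fin.cons (r k) (update r i s)) v).det := by
        simp only [fun j => linearMap_apply_eq_sum L (fun k => r k (v j)), det_rowMatrix_cons,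
          mul_sum, sum_mul]
        rw [sum_comm]
        exact sum_congr rfl fun k _ => sum_congr rfl fun j _ => by ring
    _ = -L (Pi.single i 1) * (rowMatrix (Fin.cons s r) v).det := by
        simp only [hcol, mul_ite, mul_zero, sum_ite_eq', mem_univ, if_true]
        ring

/-- With `L₁ = d(∂ᵢH)`, `L₂ = dH`, `c = pᵢ`, `s = du`, `t = dpᵢ` this is one summand of `dΦ`;
the two `t ∧ ω` contributions cancel. -/
lemma sum_alternating_term (r : Fin n → V → ℝ) (L₁ L₂ : (Fin n → ℝ) →ₗ[ℝ] ℝ) (c : ℝ)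
    (s t : V → ℝ) (i : Fin n) (v : Fin (n + 1) → V) :
    ∑ j : Fin (n + 1), (-1) ^ (j : ℕ) *
        (L₁ (fun k => r k (v j)) * (c * (rowMatrix r (j.removeNth v)).det
            - (rowMatrix (update r i s) (j.removeNth v)).det)
          + L₂ (Pi.single i 1) * (t (v j) * (rowMatrix r (j.removeNth v)).det)
          + L₂ (fun k => r k (v j)) * (rowMatrix (update r i t) (j.removeNth v)).det)
      = L₁ (Pi.single i 1) * (rowMatrix (Fin.cons s r) v).det := by
  have hvol := sum_alternating_mul_det_update r L₁ i (r i) v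
  rw [update_eq_self, det_rowMatrix_cons_self, mul_zero] at hvol
  have hs := sum_alternating_mul_det_update r L₁ i s v
  have ht := sum_alternating_mul_det_update r L₂ i t v
  have hψ := det_rowMatrix_cons t r v
  calc _ = c * ∑ j : Fin (n + 1), (-1) ^ (j : ℕ) * L₁ (fun k => r k (v j))
            * (rowMatrix r (j.removeNth v)).det
        - ∑ j : Fin (n + 1), (-1) ^ (j : ℕ) * L₁ (fun k => r k (v j))
            * (rowMatrix (update r i s) (j.removeNth v)).det
        + L₂ (Pi.single i 1) * ∑ j : Fin (n + 1), (-1) ^ (j : ℕ) * t (v j)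
            * (rowMatrix r (j.removeNth v)).det
        + ∑ j : Fin (n + 1), (-1) ^ (j : ℕ) * L₂ (fun k => r k (v j))
            * (rowMatrix (update r i t) (j.removeNth v)).det := by
        simp only [mul_sum, ← sum_sub_distrib, ← sum_add_distrib]
        exact sum_congr rfl fun j _ => by ring
    _ = _ := by rw [hvol, hs, ht, ← hψ]; ring

abbrev JetSpace (n m : ℕ) := (Fin n → ℝ) × (Fin m → ℝ) × (Fin m → Fin n → ℝ)

variable {m : ℕ}

def dx : Fin n → JetSpace n m → ℝ := fun k z => z.1 k

def du (a : Fin m) : JetSpace n m → ℝ := fun z => z.2.1 a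

def dp (a : Fin m) (i : Fin n) : JetSpace n m → ℝ := fun z => z.2.2 a i

lemma fderiv_sum_sum_apply (g : Fin m → Fin n → (Fin n → ℝ) → ℝ) (h : Fin m → (Fin n → ℝ) → ℝ)
    (q : JetSpace n m) (hg : ∀ a i, DifferentiableAt ℝ (g a i) q.1)
    (hh : ∀ a, DifferentiableAt ℝ (h a) q.1) (c₀ : ℝ) (c₁ c₂ : Fin m → Fin n → ℝ)
    (u : JetSpace n m) :
    fderiv ℝ (fun y : JetSpace n m =>
        ∑ a, ∑ i, (g a i y.1 * (y.2.2 a i * c₀ - c₁ a i) + h a y.1 * c₂ a i)) q u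
      = ∑ a, ∑ i, (fderiv ℝ (g a i) q.1 u.1 * (q.2.2 a i * c₀ - c₁ a i)
          + g a i q.1 * (u.2.2 a i * c₀) + fderiv ℝ (h a) q.1 u.1 * c₂ a i) := by
  let p : Fin m → Fin n → JetSpace n m →L[ℝ] ℝ := fun a i =>
    (ContinuousLinearMap.proj (R := ℝ) (φ := fun _ : Fin n => ℝ) i).comp
      ((ContinuousLinearMap.proj (R := ℝ) (φ := fun _ : Fin m => Fin n → ℝ) a).comp
        ((ContinuousLinearMap.snd ℝ _ _).comp (ContinuousLinearMap.snd ℝ _ _)))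
  have hp : ∀ a i, HasFDerivAt (fun y : JetSpace n m => y.2.2 a i) (p a i) q :=
    fun a i => (p a i).hasFDerivAt
  have hD := HasFDerivAt.fun_sum (u := univ) fun a _ => HasFDerivAt.fun_sum (u := univ) fun i _ =>
    ((((hg a i).hasFDerivAt.comp q hasFDerivAt_fst).fun_mul
        (((hp a i).mul_const c₀).sub_const (c₁ a i))).fun_add
      (((hh a).hasFDerivAt.comp q hasFDerivAt_fst).mul_const (c₂ a i)))
  simp only [Function.comp_def] at hD
  rw [hD.fderiv]
  simp only [_root_.sum_apply, _root_.add_apply, _root_.smul_apply, ContinuousLinearMap.comp_apply,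
    ContinuousLinearMap.coe_snd', ContinuousLinearMap.proj_apply, smul_eq_mul,
    ContinuousLinearMap.coe_fst', p]
  exact sum_congr rfl fun a _ => sum_congr rfl fun i _ => by ring

lemma sum_det_contact_eq (G : Fin n → ℝ) (c : ℝ) (a : Fin m) (y : JetSpace n m)
    (w : Fin n → JetSpace n m) :
    -(∑ i, G i * (Matrix.of fun k j : Fin n =>
          if k = i then (w j).2.1 a - ∑ l, y.2.2 a l * (w j).1 l else (w j).1 k).det)
      + c * ∑ i, (Matrix.of fun k j : Fin n => if k = i then (w j).2.2 a i else (w j).1 k).det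
      = ∑ i, (G i * (y.2.2 a i * (rowMatrix dx w).det - (rowMatrix (update dx i (du a)) w).det)
          + c * (rowMatrix (update dx i (dp a i)) w).det) := by
  have hθ : ∀ i, (Matrix.of fun k j : Fin n =>
        if k = i then (w j).2.1 a - ∑ l, y.2.2 a l * (w j).1 l else (w j).1 k)
      = rowMatrix (update dx i fun z => du a z - ∑ l, y.2.2 a l * dx l z) w := by
    intro i; ext k j; by_cases hk : k = i <;> simp [rowMatrix, update_apply, hk, dx, du]
  have hψ : ∀ i, (Matrix.of fun k j : Fin n => if k = i then (w j).2.2 a i else (w j).1 k)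
      = rowMatrix (update dx i (dp a i)) w := by
    intro i; ext k j; by_cases hk : k = i <;> simp [rowMatrix, update_apply, hk, dx, dp]
  simp only [hθ, hψ, det_rowMatrix_update_sub_sum, mul_sum, ← sum_neg_distrib, ← sum_add_distrib]
  exact sum_congr rfl fun i _ => by ring

end ConservationLaw

open ConservationLaw

/-- on the jet space `M = J¹(ℝ^n, ℝ^m) = ℝ^n × ℝ^m × (ℝ^m ⊗ (ℝ^n)^*)` with
coordinates `(x, u, p)`, contact forms `θ^a = du^a − p^a_i dx^i`, `ψ^a = dp^a_i ∧ dx^{(i)}`,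
let `H : ℝ^n → ℝ^m` be harmonic and `ρ = (−1)^n * dH`.  Then the `n`-form
`Φ = ᵗρ ∧ θ + ᵗH ψ` is closed.

In coordinates, `(θ^a ∧ dx^{(i)})(w_1,…,w_n)` is the determinant of the matrix whose `i`-th
row is `(θ^a(w_j))_j` and whose other rows are the `x`-components `((w_j)_x^k)_j`; likewise
for `(dp^a_i ∧ dx^{(i)})`.  With these conventions
`Φ_q(w) = Σ_a ( − Σ_i ∂_iH^a(x) det(row i ↦ θ^a(w_j)) + H^a(x) Σ_i det(row i ↦ (w_j)_p^{a,i}) )`,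
and closedness is `dΦ(v₀,…,v_n) = Σ_j (−1)^j D_{v_j} Φ(v₀,…,v̂_j,…,v_n) = 0`. -/
theorem conservation_law_closed
    (n m : ℕ) (H : (Fin n → ℝ) → Fin m → ℝ) (hH : ContDiff ℝ 2 H)
    (hharm : ∀ (a : Fin m) (x : Fin n → ℝ),
      ∑ i : Fin n, fderiv ℝ (fun y => fderiv ℝ (fun z => H z a) y (Pi.single i 1))
        x (Pi.single i 1) = 0)
    (Φ : ((Fin n → ℝ) × (Fin m → ℝ) × (Fin m → Fin n → ℝ)) →
      (Fin n → ((Fin n → ℝ) × (Fin m → ℝ) × (Fin m → Fin n → ℝ))) → ℝ)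
    (hΦ : ∀ q w, Φ q w =
      ∑ a : Fin m,
        (-(∑ i : Fin n, fderiv ℝ (fun y => H y a) q.1 (Pi.single i 1) *
            Matrix.det (Matrix.of fun k j : Fin n =>
              if k = i then (w j).2.1 a - ∑ l : Fin n, q.2.2 a l * (w j).1 l
              else (w j).1 k))
         + H q.1 a * ∑ i : Fin n,
            Matrix.det (Matrix.of fun k j : Fin n =>
              if k = i then (w j).2.2 a i else (w j).1 k))) :
    ∀ (q : (Fin n → ℝ) × (Fin m → ℝ) × (Fin m → Fin n → ℝ))
      (v : Fin (n + 1) → ((Fin n → ℝ) × (Fin m → ℝ) × (Fin m → Fin n → ℝ))),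
      ∑ j : Fin (n + 1), (-1 : ℝ) ^ (j : ℕ) *
        fderiv ℝ (fun y => Φ y (j.removeNth v)) q (v j) = 0 := by
  intro q v
  have hHa : ∀ a, ContDiff ℝ 2 (fun z => H z a) := fun a => contDiff_pi.mp hH a
  have hdH : ∀ a i, ContDiff ℝ 1 (fun x => fderiv ℝ (fun z => H z a) x (Pi.single i 1)) :=
    fun a i => ((hHa a).fderiv_right (m := 1) (by norm_num)).clm_apply contDiff_const
  obtain rfl : Φ = fun y w => ∑ a, ∑ i,
      (fderiv ℝ (fun z => H z a) y.1 (Pi.single i 1)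
          * (y.2.2 a i * (rowMatrix dx w).det - (rowMatrix (update dx i (du a)) w).det)
        + H y.1 a * (rowMatrix (update dx i (dp a i)) w).det) := by
    funext y w
    rw [hΦ]
    exact sum_congr rfl fun a _ => sum_det_contact_eq _ _ a y w
  simp only [fderiv_sum_sum_apply _ (fun a y => H y a) q
    (fun a i => (hdH a i).differentiable one_ne_zero _)
    (fun a => (hHa a).differentiable (by norm_num) _), mul_sum]
  rw [sum_comm]
  refine sum_eq_zero fun a _ => ?_
  rw [sum_comm]
  calc _ = ∑ i, fderiv ℝ (fun x => fderiv ℝ (fun z => H z a) x (Pi.single i 1)) q.1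
          (Pi.single i 1) * (rowMatrix (Fin.cons (du a) dx) v).det :=
        sum_congr rfl fun i _ => sum_alternating_term dx _ _ _ (du a) (dp a i) i v
    _ = 0 := by rw [← sum_mul, hharm, zero_mul]
end

section
/- With notation as in the harmonic-function jet space M = J^1(ℝ^n,ℝ^m), let χ : [0,1] × S^{n−1} → M, χ(r,s) = (x(s), u(s), A(s) + (1−r) ζ(s) ᵗN(s)), where g(s) = (x(s),u(s),A(s)) is isotropic and N is the outward unit normal of the embedded hypersurface x∘g(S^{n−1}). Then χ^*θ^a = 0 for all a, and χ^*ψ^a = −ζ^a dr ∧ g^*(N ⌟ ω), where ω = dx^1 ∧ ⋯ ∧ dx^n. -/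
/-!
Write `D` for the differential of `χ` at `(r, s)` on `ℝ × S^n`. Since `χ` is affine in `r`,
`D (t, v) = t • (0, 0, -ζ ᵗN) + D (0, v)`, and `D (0, v)` has `x`- and `u`-components `dx v` and
`du v`. So `θ^a(D (t, v)) = (du^a - A^a_i dx^i)(v) - (1 - r) ζ^a ⟪N, dx v⟫`, which vanishes by
isotropy and normality of `N`.

For `ψ^a`, expand the `p`-row of each determinant linearly. The part not involving `t` is the
determinant of `n + 1` linear images of tangent vectors `v_j ∈ s^⊥`; these are linearly dependent,
so it vanishes. What remains is `-ζ^a Σ_i N_i det(dx v with row i replaced by t)`, and expanding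
the `i`-th row and then regrouping along the columns turns this into
`-ζ^a Σ_k (-1)^k t_k det(N, dx v_j (j ≠ k))`.

The sphere is not a set of unique differentiability, so `fderivWithin` on `ℝ × S^n` is pinned
down only on tangent-cone directions; derivatives are compared there.
-/

open scoped RealInnerProductSpace
open Set

theorem mem_tangentConeAt_of_hasDerivAt {E : Type*} [NormedAddCommGroup E] [NormedSpace ℝ E]
    {γ : ℝ → E} {v : E} {s : Set E} (hγ : HasDerivAt γ v 0) (hs : ∀ ε, γ ε ∈ s) :
    v ∈ tangentConeAt ℝ s (γ 0) := by
  have h := hγ.hasFDerivAt.hasFDerivWithinAt.mapsTo_tangent_cone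
    (by simp : (1 : ℝ) ∈ tangentConeAt ℝ univ 0)
  simpa using tangentConeAt_mono (image_subset_iff.2 fun ε _ => hs ε) h

theorem mem_tangentConeAt_sphere {E : Type*} [NormedAddCommGroup E] [InnerProductSpace ℝ E]
    {s v : E} (hs : ‖s‖ = 1) (hv : ⟪v, s⟫ = 0) :
    v ∈ tangentConeAt ℝ (Metric.sphere 0 1) s := by
  rcases eq_or_ne v 0 with rfl | hv0
  · exact zero_mem_tangentConeAt (subset_closure (by simpa using hs))
  set ρ := ‖v‖
  set e := ρ⁻¹ • v
  have hρ : ρ ≠ 0 := norm_ne_zero_iff.2 hv0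
  have he : ‖e‖ = 1 := by simp [e, ρ, norm_smul, hρ]
  have hse : ⟪s, e⟫ = 0 := by rw [real_inner_smul_right, real_inner_comm, hv, mul_zero]
  set γ : ℝ → E := fun ε => Real.cos (ρ * ε) • s + Real.sin (ρ * ε) • e
  have hγ : HasDerivAt γ v 0 := by
    have hc := ((hasDerivAt_id (0 : ℝ)).const_mul ρ).cos.smul_const s
    have hs' := ((hasDerivAt_id (0 : ℝ)).const_mul ρ).sin.smul_const e
    refine (hc.add hs').congr_deriv ?_
    simp [e, smul_smul, hρ]
  have hγs : ∀ ε, γ ε ∈ Metric.sphere (0 : E) 1 := by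
    intro ε
    rw [mem_sphere_zero_iff_norm, ← pow_eq_one_iff_of_nonneg (norm_nonneg _) two_ne_zero,
      norm_add_sq_real, norm_smul, norm_smul, hs, he, real_inner_smul_left,
      real_inner_smul_right, hse]
    simp [Real.cos_sq_add_sin_sq]
  simpa [γ] using mem_tangentConeAt_of_hasDerivAt hγ hγs

section Slice

variable {𝕜 : Type*} [NontriviallyNormedField 𝕜]
  {G E F F₁ : Type*} [NormedAddCommGroup G] [NormedSpace 𝕜 G] [NormedAddCommGroup E]
  [NormedSpace 𝕜 E] [NormedAddCommGroup F] [NormedSpace 𝕜 F] [NormedAddCommGroup F₁]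
  [NormedSpace 𝕜 F₁] {S : Set E} {s : E}

theorem fderivWithin_comp_slice_apply {f : G × E → F} {r : G}
    (hf : DifferentiableWithinAt 𝕜 f (univ ×ˢ S) (r, s)) (π : F →L[𝕜] F₁) {v : E}
    (hv : v ∈ tangentConeAt 𝕜 S s) :
    fderivWithin 𝕜 (fun y => π (f (r, y))) S s v
      = π (fderivWithin 𝕜 f (univ ×ˢ S) (r, s) (0, v)) := by
  have hslice : HasFDerivWithinAt (fun y => π (f (r, y)))
      (π.comp ((fderivWithin 𝕜 f (univ ×ˢ S) (r, s)).comp (.inr 𝕜 G E))) S s :=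
    π.hasFDerivAt.comp_hasFDerivWithinAt s <| hf.hasFDerivWithinAt.comp s
      (hasFDerivAt_prodMk_right r s).hasFDerivWithinAt fun _ hy => ⟨trivial, hy⟩
  exact hslice.differentiableWithinAt.hasFDerivWithinAt.unique_on hslice hv

theorem hasDerivAt_slice_left {f : 𝕜 × E → F} {r : 𝕜}
    (hf : DifferentiableWithinAt 𝕜 f (univ ×ˢ S) (r, s)) (hs : s ∈ S) :
    HasDerivAt (fun ρ => f (ρ, s)) (fderivWithin 𝕜 f (univ ×ˢ S) (r, s) (1, 0)) r := by
  have h := hf.hasFDerivWithinAt.comp_hasDerivWithinAt r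
    (((hasDerivAt_id' r).prodMk (hasDerivAt_const r s)).hasDerivWithinAt (s := univ))
    fun _ _ => mk_mem_prod trivial hs
  exact hasDerivWithinAt_univ.1 h

end Slice

theorem not_linearIndependent_of_forall_inner_eq_zero {E ι : Type*} [NormedAddCommGroup E]
    [InnerProductSpace ℝ E] [FiniteDimensional ℝ E] [Fintype ι]
    (hι : Fintype.card ι = Module.finrank ℝ E) {s : E} (hs : s ≠ 0) {v : ι → E}
    (hv : ∀ j, ⟪v j, s⟫ = 0) : ¬LinearIndependent ℝ v := by
  intro hli
  have hvW : ∀ j, v j ∈ (ℝ ∙ s)ᗮ := fun j =>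
    Submodule.mem_orthogonal_singleton_iff_inner_left.2 (hv j)
  have hcard := (LinearIndependent.of_comp (ℝ ∙ s)ᗮ.subtype
    (v := fun j => (⟨v j, hvW j⟩ : (ℝ ∙ s)ᗮ)) hli).fintype_card_le_finrank
  have hW := Submodule.finrank_add_finrank_orthogonal (ℝ ∙ s)
  rw [finrank_span_singleton hs] at hW
  omega

namespace Matrix

variable {R M ι : Type*} [CommRing R] [AddCommGroup M] [Module R M] [Fintype ι] [DecidableEq ι]

theorem det_of_apply_eq_zero_of_not_linearIndependent [IsDomain R] (ℓ : ι → M →ₗ[R] R)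
    {v : ι → M} (hv : ¬LinearIndependent R v) : (of fun k j => ℓ k (v j)).det = 0 := by
  rw [← det_transpose]
  exact (detRowAlternating.compLinearMap (LinearMap.pi ℓ)).map_linearDependent v hv

theorem sum_det_updateRow_add_mul_of_not_linearIndependent [IsDomain R] (ℓ φ : ι → M →ₗ[R] R)
    (c t : ι → R) {v : ι → M} (hv : ¬LinearIndependent R v) :
    ∑ i, (of fun k j => if k = i then φ i (v j) + t j * c i else ℓ k (v j)).det
      = ∑ i, c i * ((of fun k j => ℓ k (v j)).updateRow i t).det := by
  refine Finset.sum_congr rfl fun i _ => ?_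
  have hsplit : (of fun k j => if k = i then φ i (v j) + t j * c i else ℓ k (v j))
      = (of fun k j => ℓ k (v j)).updateRow i ((fun j => φ i (v j)) + c i • t) := by
    ext k j
    by_cases hk : k = i <;> simp [updateRow_apply, hk, mul_comm]
  have hφ : ((of fun k j => ℓ k (v j)).updateRow i fun j => φ i (v j))
      = of fun k j => Function.update ℓ i (φ i) k (v j) := by
    ext k j
    by_cases hk : k = i <;> simp [updateRow_apply, hk]
  rw [hsplit, det_updateRow_add, det_updateRow_smul, hφ,
    det_of_apply_eq_zero_of_not_linearIndependent _ hv, zero_add]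

theorem sum_mul_det_updateRow {n : ℕ} (G : Matrix (Fin (n + 1)) (Fin (n + 1)) R)
    (c t : Fin (n + 1) → R) :
    ∑ i, c i * (G.updateRow i t).det
      = ∑ k : Fin (n + 1),
          (-1) ^ (k : ℕ) * t k * (of (vecCons c fun l => Gᵀ (k.succAbove l))).det := by
  have hrow : ∀ i : Fin (n + 1), (G.updateRow i t).det
      = ∑ k : Fin (n + 1),
          (-1) ^ ((i : ℕ) + k) * t k * (G.submatrix i.succAbove k.succAbove).det := by
    intro i
    rw [det_succ_row _ i]
    simp
  have hcol : ∀ k : Fin (n + 1), (of (vecCons c fun l => Gᵀ (k.succAbove l))).det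
      = ∑ i : Fin (n + 1), (-1) ^ (i : ℕ) * c i * (G.submatrix i.succAbove k.succAbove).det := by
    intro k
    rw [det_succ_row_zero]
    refine Finset.sum_congr rfl fun i _ => ?_
    rw [← det_transpose (G.submatrix _ _)]
    rfl
  simp only [hrow, hcol, Finset.mul_sum]
  rw [Finset.sum_comm]
  refine Finset.sum_congr rfl fun k _ => Finset.sum_congr rfl fun i _ => ?_
  ring

end Matrix

section Cylinder

variable {E α ι : Type*}

def cylinder (x : E → EuclideanSpace ℝ ι) (u : E → α → ℝ) (A : E → α → ι → ℝ) (ζ : E → α → ℝ)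
    (N : E → EuclideanSpace ℝ ι) (p : ℝ × E) :
    EuclideanSpace ℝ ι × (α → ℝ) × (α → ι → ℝ) :=
  (x p.2, u p.2, fun a i => A p.2 a i + (1 - p.1) * ζ p.2 a * N p.2 i)

variable [Fintype α] [Fintype ι]
  {x : E → EuclideanSpace ℝ ι} {u : E → α → ℝ} {A : E → α → ι → ℝ} {ζ : E → α → ℝ}
  {N : E → EuclideanSpace ℝ ι}

theorem hasDerivAt_cylinder_left (r : ℝ) (s : E) :
    HasDerivAt (fun ρ => cylinder x u A ζ N (ρ, s)) (0, 0, fun a i => -(ζ s a * N s i)) r := by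
  unfold cylinder
  refine (hasDerivAt_const r (x s)).prodMk ((hasDerivAt_const r (u s)).prodMk ?_)
  refine hasDerivAt_pi.2 fun a => hasDerivAt_pi.2 fun i => ?_
  simpa using ((((hasDerivAt_id' r).const_sub 1).mul_const (ζ s a)).mul_const (N s i)).const_add
    (A s a i)

variable [NormedAddCommGroup E] [NormedSpace ℝ E] {S : Set E} {r : ℝ} {s : E}

theorem differentiableOn_cylinder (hx : DifferentiableOn ℝ x S) (hu : DifferentiableOn ℝ u S)
    (hA : DifferentiableOn ℝ A S) (hζ : DifferentiableOn ℝ ζ S) (hN : DifferentiableOn ℝ N S) :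
    DifferentiableOn ℝ (cylinder x u A ζ N) (univ ×ˢ S) := by
  have hsnd : MapsTo Prod.snd (univ ×ˢ S : Set (ℝ × E)) S := fun _ hp => hp.2
  have hx' := hx.comp differentiableOn_snd hsnd
  have hu' := hu.comp differentiableOn_snd hsnd
  have hA' := hA.comp differentiableOn_snd hsnd
  have hζ' := hζ.comp differentiableOn_snd hsnd
  have hN' : ∀ i, DifferentiableOn ℝ (fun p : ℝ × E => N p.2 i) (univ ×ˢ S) := fun i =>
    (EuclideanSpace.proj (𝕜 := ℝ) (ι := ι) i).differentiable.comp_differentiableOn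
      (hN.comp differentiableOn_snd hsnd)
  simp only [Function.comp_def] at hx' hu' hA' hζ'
  unfold cylinder
  fun_prop

theorem fderivWithin_cylinder_apply
    (hf : DifferentiableWithinAt ℝ (cylinder x u A ζ N) (univ ×ˢ S) (r, s)) (hs : s ∈ S)
    (t : ℝ) (v : E) :
    fderivWithin ℝ (cylinder x u A ζ N) (univ ×ˢ S) (r, s) (t, v)
      = t • (0, 0, fun a i => -(ζ s a * N s i))
        + fderivWithin ℝ (cylinder x u A ζ N) (univ ×ˢ S) (r, s) (0, v) := by
  rw [← (hasDerivAt_slice_left hf hs).unique (hasDerivAt_cylinder_left r s), ← map_smul,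
    ← map_add]
  congr 1
  ext <;> simp

theorem fderivWithin_cylinder_apply_fst
    (hf : DifferentiableWithinAt ℝ (cylinder x u A ζ N) (univ ×ˢ S) (r, s)) (hs : s ∈ S)
    (t : ℝ) {v : E} (hv : v ∈ tangentConeAt ℝ S s) :
    (fderivWithin ℝ (cylinder x u A ζ N) (univ ×ˢ S) (r, s) (t, v)).1
      = fderivWithin ℝ x S s v := by
  have h := fderivWithin_comp_slice_apply hf (.fst ℝ _ _) hv
  rw [fderivWithin_cylinder_apply hf hs]
  simpa [cylinder] using h.symm

theorem fderivWithin_cylinder_apply_snd_fst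
    (hf : DifferentiableWithinAt ℝ (cylinder x u A ζ N) (univ ×ˢ S) (r, s)) (hs : s ∈ S)
    (t : ℝ) {v : E} (hv : v ∈ tangentConeAt ℝ S s) (a : α) :
    (fderivWithin ℝ (cylinder x u A ζ N) (univ ×ˢ S) (r, s) (t, v)).2.1 a
      = fderivWithin ℝ (fun y => u y a) S s v := by
  have h := fderivWithin_comp_slice_apply hf
    ((ContinuousLinearMap.proj a).comp ((ContinuousLinearMap.fst ℝ _ _).comp (.snd ℝ _ _))) hv
  rw [fderivWithin_cylinder_apply hf hs]
  simpa [cylinder] using h.symm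

theorem cylinder_pullback_theta_eq_zero
    (hf : DifferentiableWithinAt ℝ (cylinder x u A ζ N) (univ ×ˢ S) (r, s)) (hs : s ∈ S)
    (t : ℝ) {v : E} (hv : v ∈ tangentConeAt ℝ S s) (a : α)
    (hNx : ⟪N s, fderivWithin ℝ x S s v⟫ = 0)
    (hiso : fderivWithin ℝ (fun y => u y a) S s v = ∑ i, A s a i * fderivWithin ℝ x S s v i) :
    (fderivWithin ℝ (cylinder x u A ζ N) (univ ×ˢ S) (r, s) (t, v)).2.1 a
      - ∑ i, (cylinder x u A ζ N (r, s)).2.2 a i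
          * (fderivWithin ℝ (cylinder x u A ζ N) (univ ×ˢ S) (r, s) (t, v)).1 i = 0 := by
  have hNx' : ∑ i, N s i * fderivWithin ℝ x S s v i = 0 := by
    simpa [PiLp.inner_apply, mul_comm] using hNx
  rw [fderivWithin_cylinder_apply_snd_fst hf hs t hv, fderivWithin_cylinder_apply_fst hf hs t hv,
    hiso]
  simp only [cylinder, add_mul, Finset.sum_add_distrib, mul_assoc, ← Finset.mul_sum, hNx']
  ring

end Cylinder

theorem cylinder_pullback_psi_eq {n : ℕ} {α : Type*} [Fintype α]
    {x : EuclideanSpace ℝ (Fin (n + 1)) → EuclideanSpace ℝ (Fin (n + 1))}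
    {u : EuclideanSpace ℝ (Fin (n + 1)) → α → ℝ}
    {A : EuclideanSpace ℝ (Fin (n + 1)) → α → Fin (n + 1) → ℝ}
    {ζ : EuclideanSpace ℝ (Fin (n + 1)) → α → ℝ}
    {N : EuclideanSpace ℝ (Fin (n + 1)) → EuclideanSpace ℝ (Fin (n + 1))} {r : ℝ}
    {s : EuclideanSpace ℝ (Fin (n + 1))}
    (hf : DifferentiableWithinAt ℝ (cylinder x u A ζ N) (univ ×ˢ Metric.sphere 0 1) (r, s))
    (hs : s ∈ Metric.sphere 0 1) (w : Fin (n + 1) → ℝ × EuclideanSpace ℝ (Fin (n + 1)))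
    (hw : ∀ j, ⟪(w j).2, s⟫ = 0) (a : α) :
    ∑ i : Fin (n + 1), Matrix.det (Matrix.of fun k j : Fin (n + 1) =>
        if k = i then
          (fderivWithin ℝ (cylinder x u A ζ N) (univ ×ˢ Metric.sphere 0 1) (r, s) (w j)).2.2 a i
        else (fderivWithin ℝ (cylinder x u A ζ N) (univ ×ˢ Metric.sphere 0 1) (r, s) (w j)).1 k)
      = -(ζ s a) * ∑ k : Fin (n + 1), (-1 : ℝ) ^ (k : ℕ) * (w k).1 *
          Matrix.det (Matrix.of fun p q : Fin (n + 1) =>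
            (Fin.cons (N s) (fun l : Fin n =>
              fderivWithin ℝ x (Metric.sphere 0 1) s ((k.removeNth w l).2)) : Fin (n + 1) →
                EuclideanSpace ℝ (Fin (n + 1))) q p) := by
  set S : Set (EuclideanSpace ℝ (Fin (n + 1))) := Metric.sphere 0 1
  set D := fderivWithin ℝ (cylinder x u A ζ N) (univ ×ˢ S) (r, s)
  have hs1 : ‖s‖ = 1 := by simpa [S] using hs
  have hT : ∀ j, (w j).2 ∈ tangentConeAt ℝ S s := fun j => mem_tangentConeAt_sphere hs1 (hw j)
  have hdep : ¬LinearIndependent ℝ fun j => (w j).2 :=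
    not_linearIndependent_of_forall_inner_eq_zero (by simp) (by rintro rfl; simp at hs1) hw
  let ℓ : Fin (n + 1) → EuclideanSpace ℝ (Fin (n + 1)) →ₗ[ℝ] ℝ := fun k =>
    ((EuclideanSpace.proj k).comp (fderivWithin ℝ x S s) :)
  let φ : Fin (n + 1) → EuclideanSpace ℝ (Fin (n + 1)) →ₗ[ℝ] ℝ := fun i =>
    ((ContinuousLinearMap.proj i).comp ((ContinuousLinearMap.proj a).comp
      ((ContinuousLinearMap.snd ℝ _ _).comp ((ContinuousLinearMap.snd ℝ _ _).comp
        (D.comp (.inr ℝ ℝ _))))) :)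
  calc _ = ∑ i, (Matrix.of fun k j => if k = i then φ i (w j).2 + (-(ζ s a) * (w j).1) * N s i
        else ℓ k (w j).2).det := by
        refine Finset.sum_congr rfl fun i _ => congrArg Matrix.det ?_
        ext k j
        simp only [Matrix.of_apply]
        split_ifs
        · rw [fderivWithin_cylinder_apply hf hs]
          simp [φ, D]
          ring
        · simp [ℓ, D, ← fderivWithin_cylinder_apply_fst hf hs (w j).1 (hT j)]
    _ = _ := Matrix.sum_det_updateRow_add_mul_of_not_linearIndependent ℓ φ _ _ hdep
    _ = _ := Matrix.sum_mul_det_updateRow _ _ _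
    _ = _ := by
        rw [Finset.mul_sum]
        refine Finset.sum_congr rfl fun k _ => ?_
        have hcols : (Matrix.of (Matrix.vecCons ⇑(N s) fun l =>
              Matrix.transpose (Matrix.of fun p j => ℓ p (w j).2) (k.succAbove l))).transpose
            = Matrix.of fun p q => (Fin.cons (N s) (fun l : Fin n =>
                fderivWithin ℝ x S s ((k.removeNth w l).2)) : Fin (n + 1) →
                  EuclideanSpace ℝ (Fin (n + 1))) q p := by
          ext p q
          refine Fin.cases ?_ (fun l => ?_) q <;> simp [ℓ, Fin.removeNth]
        rw [← Matrix.det_transpose (Matrix.of _), hcols]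
        ring

theorem cylinder_pullback_computation_general
    (n m : ℕ)
    (x : EuclideanSpace ℝ (Fin (n + 1)) → EuclideanSpace ℝ (Fin (n + 1)))
    (u : EuclideanSpace ℝ (Fin (n + 1)) → Fin m → ℝ)
    (A : EuclideanSpace ℝ (Fin (n + 1)) → Fin m → Fin (n + 1) → ℝ)
    (ζ : EuclideanSpace ℝ (Fin (n + 1)) → Fin m → ℝ)
    (N : EuclideanSpace ℝ (Fin (n + 1)) → EuclideanSpace ℝ (Fin (n + 1)))
    (S : Set (EuclideanSpace ℝ (Fin (n + 1)))) (hS : S = Metric.sphere 0 1)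
    (hx : ContDiffOn ℝ 2 x S) (hu : ContDiffOn ℝ 2 u S)
    (hA : ContDiffOn ℝ 1 (fun s => A s) S) (hζ : ContDiffOn ℝ 1 (fun s => ζ s) S)
    (hN : ContDiffOn ℝ 1 N S)
    (hNnormal : ∀ s ∈ S, ∀ v : EuclideanSpace ℝ (Fin (n + 1)), ⟪v, s⟫ = 0 →
      ⟪N s, fderivWithin ℝ x S s v⟫ = 0)
    (hiso : ∀ s ∈ S, ∀ v : EuclideanSpace ℝ (Fin (n + 1)), ⟪v, s⟫ = 0 → ∀ a : Fin m,
      fderivWithin ℝ (fun y => u y a) S s v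
        = ∑ i : Fin (n + 1), A s a i * (fderivWithin ℝ x S s v) i)
    (χ : ℝ × EuclideanSpace ℝ (Fin (n + 1)) →
      EuclideanSpace ℝ (Fin (n + 1)) × (Fin m → ℝ) × (Fin m → Fin (n + 1) → ℝ))
    (hχ : ∀ r s, χ (r, s) =
      (x s, u s, fun a i => A s a i + (1 - r) * ζ s a * N s i)) :
    ∀ (r : ℝ), r ∈ Set.Icc (0:ℝ) 1 → ∀ s ∈ S,
      -- χ^*θ^a = 0 :
      (∀ (t : ℝ) (v : EuclideanSpace ℝ (Fin (n + 1))), ⟪v, s⟫ = 0 → ∀ a : Fin m,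
        (fderivWithin ℝ χ (Set.univ ×ˢ S) (r, s) (t, v)).2.1 a
          - ∑ i : Fin (n + 1), (χ (r, s)).2.2 a i *
              (fderivWithin ℝ χ (Set.univ ×ˢ S) (r, s) (t, v)).1 i = 0) ∧
      -- χ^*ψ^a = −ζ^a dr ∧ g^*(N ⌟ ω) :
      (∀ (w : Fin (n + 1) → ℝ × EuclideanSpace ℝ (Fin (n + 1))),
        (∀ j, ⟪(w j).2, s⟫ = 0) → ∀ a : Fin m,
        ∑ i : Fin (n + 1), Matrix.det (Matrix.of fun k j : Fin (n + 1) =>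
            if k = i then (fderivWithin ℝ χ (Set.univ ×ˢ S) (r, s) (w j)).2.2 a i
            else (fderivWithin ℝ χ (Set.univ ×ˢ S) (r, s) (w j)).1 k)
        = -(ζ s a) * ∑ k : Fin (n + 1), (-1 : ℝ) ^ (k : ℕ) * (w k).1 *
            Matrix.det (Matrix.of fun p q : Fin (n + 1) =>
              (Fin.cons (N s) (fun l : Fin n =>
                fderivWithin ℝ x S s ((k.removeNth w l).2)) : Fin (n + 1) →
                  EuclideanSpace ℝ (Fin (n + 1))) q p)) := by
  obtain rfl : χ = cylinder x u A ζ N := funext fun p => hχ p.1 p.2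
  subst hS
  intro r _ s hs
  have hf : DifferentiableWithinAt ℝ (cylinder x u A ζ N) (univ ×ˢ Metric.sphere 0 1) (r, s) :=
    differentiableOn_cylinder (hx.differentiableOn two_ne_zero) (hu.differentiableOn two_ne_zero)
      hA.differentiableOn_one hζ.differentiableOn_one hN.differentiableOn_one (r, s)
      ⟨trivial, hs⟩
  refine ⟨fun t v hv a => ?_, fun w hw a => cylinder_pullback_psi_eq hf hs w hw a⟩
  exact cylinder_pullback_theta_eq_zero hf hs t
    (mem_tangentConeAt_sphere (by simpa using hs) hv) a (hNnormal s hs v hv) (hiso s hs v hv a)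

/-- in the jet space `M = J¹(ℝ^{n+1}, ℝ^m)`, let
`χ(r,s) = (x(s), u(s), A(s) + (1−r) ζ(s) ᵗN(s))` on `ℝ × S^n`, where
`g(s) = (x(s), u(s), A(s))` is isotropic and `N` is the outward unit normal of the embedded
hypersurface `x∘g(S^n)` (so `⟪N, dx(v)⟫ = 0` on sphere-tangent vectors `v`).  Then
`χ^*θ^a = 0` and `χ^*ψ^a = −ζ^a dr ∧ g^*(N ⌟ ω)` with `ω = dx^0 ∧ ⋯ ∧ dx^n`.

Pullbacks are evaluated on tangent vectors `w_j = (t_j, v_j)` of `ℝ × S^n` via the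
differential `dχ = fderivWithin` of `χ` on `ℝ × S^n`; `ψ^a` on vectors `W_1,…,W_{n+1}` is
`Σ_i det(row i ↦ (W_j)_p^{a,i}, rows k≠i ↦ (W_j)_x^k)`, `dr ∧ β` is expanded with the usual
signs, and `(N ⌟ ω)(X_1,…,X_n) = det(N, X_1, …, X_n)`. -/
theorem cylinder_pullback_computation
    (n m : ℕ)
    (x : EuclideanSpace ℝ (Fin (n + 1)) → EuclideanSpace ℝ (Fin (n + 1)))
    (u : EuclideanSpace ℝ (Fin (n + 1)) → Fin m → ℝ)
    (A : EuclideanSpace ℝ (Fin (n + 1)) → Fin m → Fin (n + 1) → ℝ)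
    (ζ : EuclideanSpace ℝ (Fin (n + 1)) → Fin m → ℝ)
    (N : EuclideanSpace ℝ (Fin (n + 1)) → EuclideanSpace ℝ (Fin (n + 1)))
    (S : Set (EuclideanSpace ℝ (Fin (n + 1)))) (hS : S = Metric.sphere 0 1)
    (hx : ContDiffOn ℝ 2 x S) (hu : ContDiffOn ℝ 2 u S)
    (hA : ContDiffOn ℝ 1 (fun s => A s) S) (hζ : ContDiffOn ℝ 1 (fun s => ζ s) S)
    (hN : ContDiffOn ℝ 1 N S)
    (hNunit : ∀ s ∈ S, ‖N s‖ = 1)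
    (hNnormal : ∀ s ∈ S, ∀ v : EuclideanSpace ℝ (Fin (n + 1)), ⟪v, s⟫ = 0 →
      ⟪N s, fderivWithin ℝ x S s v⟫ = 0)
    (hiso : ∀ s ∈ S, ∀ v : EuclideanSpace ℝ (Fin (n + 1)), ⟪v, s⟫ = 0 → ∀ a : Fin m,
      fderivWithin ℝ (fun y => u y a) S s v
        = ∑ i : Fin (n + 1), A s a i * (fderivWithin ℝ x S s v) i)
    (χ : ℝ × EuclideanSpace ℝ (Fin (n + 1)) →
      EuclideanSpace ℝ (Fin (n + 1)) × (Fin m → ℝ) × (Fin m → Fin (n + 1) → ℝ))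
    (hχ : ∀ r s, χ (r, s) =
      (x s, u s, fun a i => A s a i + (1 - r) * ζ s a * N s i)) :
    ∀ (r : ℝ), r ∈ Set.Icc (0:ℝ) 1 → ∀ s ∈ S,
      -- χ^*θ^a = 0 :
      (∀ (t : ℝ) (v : EuclideanSpace ℝ (Fin (n + 1))), ⟪v, s⟫ = 0 → ∀ a : Fin m,
        (fderivWithin ℝ χ (Set.univ ×ˢ S) (r, s) (t, v)).2.1 a
          - ∑ i : Fin (n + 1), (χ (r, s)).2.2 a i *
              (fderivWithin ℝ χ (Set.univ ×ˢ S) (r, s) (t, v)).1 i = 0) ∧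
      -- χ^*ψ^a = −ζ^a dr ∧ g^*(N ⌟ ω) :
      (∀ (w : Fin (n + 1) → ℝ × EuclideanSpace ℝ (Fin (n + 1))),
        (∀ j, ⟪(w j).2, s⟫ = 0) → ∀ a : Fin m,
        ∑ i : Fin (n + 1), Matrix.det (Matrix.of fun k j : Fin (n + 1) =>
            if k = i then (fderivWithin ℝ χ (Set.univ ×ˢ S) (r, s) (w j)).2.2 a i
            else (fderivWithin ℝ χ (Set.univ ×ˢ S) (r, s) (w j)).1 k)
        = -(ζ s a) * ∑ k : Fin (n + 1), (-1 : ℝ) ^ (k : ℕ) * (w k).1 *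
            Matrix.det (Matrix.of fun p q : Fin (n + 1) =>
              (Fin.cons (N s) (fun l : Fin n =>
                fderivWithin ℝ x S s ((k.removeNth w l).2)) : Fin (n + 1) →
                  EuclideanSpace ℝ (Fin (n + 1))) q p)) :=
  cylinder_pullback_computation_general n m x u A ζ N S hS hx hu hA hζ hN hNnormal hiso χ hχ
end
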